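/- arXiv:2410.22130 — 3 statements merged into one kernel-verified Lean document; each statement's English description precedes it below -/
import Mathlib

section
/- For the epistemic program Π consisting of the rules {aᵢ ← ¬K n_aᵢ : 1≤i≤n} ∪ {n_aᵢ ← ¬aᵢ : 1≤i≤n} ∪ {g ← aᵢ : 1≤i≤n} ∪ {⊥ ← Kg}, the unique worldview is W = {{n_a₁,...,n_aₙ}} (the singleton set containing the interpretation making all n_aᵢ true and all aᵢ and g false). -/
/-! Framework for (epistemic) logic programs:
objective literals, rules, programs, reducts, stable models,
subjective literals, subjective reducts, worldviews, and the
generate-and-test programs T₀, G₀, kp, G₁. -/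

/-- Extended objective literals over an atom type `α`:
an atom, a negated atom, a doubly negated atom, or a truth constant. -/
inductive Lit (α : Type) : Type
  | pos (a : α)
  | neg (a : α)
  | nneg (a : α)
  | top
  | bot

namespace Lit

/-- Satisfaction of an extended objective literal by an interpretation. -/
def sat {α : Type} (I : Set α) : Lit α → Prop
  | .pos a => a ∈ I
  | .neg a => a ∉ I
  | .nneg a => a ∈ I
  | .top => True
  | .bot => False

/-- A literal is negated if it is of the form `¬a` or `¬¬a`. -/
def isNeg {α : Type} : Lit α → Prop
  | .neg _ => True
  | .nneg _ => True
  | _ => False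

/-- Rename atoms in a literal. -/
def map {α β : Type} (f : α → β) : Lit α → Lit β
  | .pos a => .pos (f a)
  | .neg a => .neg (f a)
  | .nneg a => .nneg (f a)
  | .top => .top
  | .bot => .bot

/-- The atoms occurring in a literal. -/
def atoms {α : Type} : Lit α → Set α
  | .pos a => {a}
  | .neg a => {a}
  | .nneg a => {a}
  | _ => ∅

end Lit

/-- An objective rule `a₁ ∨ ... ∨ aₙ ← L₁,...,Lₘ`. -/
structure Rule (α : Type) where
  head : Set α
  body : Set (Lit α)

/-- An objective program: a set of rules. -/
abbrev Program (α : Type) := Set (Rule α)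

/-- A rule is satisfied by `I` if `I` satisfies some head atom
whenever it satisfies all body literals. -/
def Rule.sat {α : Type} (I : Set α) (r : Rule α) : Prop :=
  (∀ L ∈ r.body, L.sat I) → ∃ a ∈ r.head, a ∈ I

/-- A model of a program satisfies all its rules. -/
def isModel {α : Type} (I : Set α) (P : Program α) : Prop := ∀ r ∈ P, r.sat I

/-- The reduct of a program with respect to `I`: drop rules with an unsatisfied
negated body literal; delete negated literals from the remaining rules. -/
def reduct {α : Type} (P : Program α) (I : Set α) : Program α :=
  { r' | ∃ r ∈ P, (∀ L ∈ r.body, L.isNeg → L.sat I) ∧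
      r' = ⟨r.head, {L | L ∈ r.body ∧ ¬ L.isNeg}⟩ }

/-- `I` is a stable model of `P` iff it is a ⊆-minimal model of the reduct `P^I`. -/
def isStable {α : Type} (P : Program α) (I : Set α) : Prop :=
  isModel I (reduct P I) ∧ ∀ J ⊆ I, isModel J (reduct P I) → J = I

/-- The set of stable models of a program. -/
def SM {α : Type} (P : Program α) : Set (Set α) := { I | isStable P I }

/-- A program extended with assumption constraints `⊥ ← ¬a` (for `a ∈ Apos`)
and `⊥ ← a` (for `a ∈ Aneg`). -/
def withAssumption {α : Type} (P : Program α) (Apos Aneg : Set α) : Program α :=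
  P ∪ ((fun a => (⟨∅, {Lit.neg a}⟩ : Rule α)) '' Apos)
    ∪ ((fun a => (⟨∅, {Lit.pos a}⟩ : Rule α)) '' Aneg)

/-- Stable models of `P` under an assumption. -/
def SMA {α : Type} (P : Program α) (Apos Aneg : Set α) : Set (Set α) :=
  SM (withAssumption P Apos Aneg)

/-- Literals of epistemic programs: an objective literal, or a subjective
atom `K l` preceded by zero, one, or two negations. -/
inductive SLit (α : Type) : Type
  | obj (l : Lit α)
  | k (l : Lit α)
  | nk (l : Lit α)
  | nnk (l : Lit α)

/-- An epistemic rule. -/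
structure ERule (α : Type) where
  head : Set α
  body : Set (SLit α)

/-- An epistemic program: a set of epistemic rules. -/
abbrev EProgram (α : Type) := Set (ERule α)

/-- `W ⊨ K l`: every interpretation in `W` satisfies `l`. -/
def satK {α : Type} (W : Set (Set α)) (l : Lit α) : Prop := ∀ I ∈ W, l.sat I

open scoped Classical in
/-- Replace a subjective literal by `⊤`/`⊥` according to `W`; objective
literals are unchanged. -/
noncomputable def SLit.reduce {α : Type} (W : Set (Set α)) : SLit α → Lit α
  | .obj l => l
  | .k l => if satK W l then .top else .bot
  | .nk l => if satK W l then .bot else .top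
  | .nnk l => if satK W l then .top else .bot

/-- The subjective reduct `P^W`. -/
noncomputable def subjReduct {α : Type} (P : EProgram α) (W : Set (Set α)) : Program α :=
  (fun r : ERule α => (⟨r.head, (SLit.reduce W) '' r.body⟩ : Rule α)) '' P

/-- A worldview: a non-empty set of interpretations `W` with `W = SM(P^W)`. -/
def isWorldview {α : Type} (P : EProgram α) (W : Set (Set α)) : Prop :=
  W.Nonempty ∧ W = SM (subjReduct P W)

/-- Normal-form subjective literals: `K a`, `¬K a`, `¬¬K a` with `a` an atom. -/
def SLit.isNormal {α : Type} : SLit α → Prop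
  | .obj _ => True
  | .k (.pos _) => True
  | .nk (.pos _) => True
  | .nnk (.pos _) => True
  | _ => False

/-- A program is in normal form if negation does not occur in the scope of `K`. -/
def isNormalForm {α : Type} (P : EProgram α) : Prop :=
  ∀ r ∈ P, ∀ L ∈ r.body, L.isNormal

/-- The atoms `a` such that a subjective atom `K a` occurs in the program; the
corresponding fresh atoms `ka` are represented as `Sum.inr a`. -/
def KAtoms {α : Type} (P : EProgram α) : Set α :=
  { a | ∃ r ∈ P, SLit.k (Lit.pos a) ∈ r.body ∨ SLit.nk (Lit.pos a) ∈ r.body ∨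
        SLit.nnk (Lit.pos a) ∈ r.body }

/-- Replace subjective literals on `K a` by objective literals on the fresh
atom `ka = Sum.inr a`; original atoms become `Sum.inl a`. -/
def SLit.t0 {α : Type} : SLit α → Lit (α ⊕ α)
  | .obj l => l.map Sum.inl
  | .k (.pos a) => .pos (Sum.inr a)
  | .nk (.pos a) => .neg (Sum.inr a)
  | .nnk (.pos a) => .nneg (Sum.inr a)
  | _ => .bot

/-- The tester program `T₀(P)`: `k(P)` plus a choice rule `{ka}`
(i.e. `ka ← ¬¬ka`) for each `ka ∈ K(P)`. -/
def T0 {α : Type} (P : EProgram α) : Program (α ⊕ α) :=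
  ((fun r : ERule α => (⟨Sum.inl '' r.head, SLit.t0 '' r.body⟩ : Rule (α ⊕ α))) '' P)
  ∪ ((fun a => (⟨{Sum.inr a}, {Lit.nneg (Sum.inr a)}⟩ : Rule (α ⊕ α))) '' KAtoms P)

/-- The generator program `G₀(P)`: `T₀(P)` plus consistency constraints
`⊥ ← ka, ¬a` for each `ka ∈ K(P)`. -/
def G0 {α : Type} (P : EProgram α) : Program (α ⊕ α) :=
  T0 P ∪ ((fun a => (⟨∅, {Lit.pos (Sum.inr a), Lit.neg (Sum.inl a)}⟩ : Rule (α ⊕ α))) '' KAtoms P)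

/-- `k(M) = M ∩ K(P)`, read as a set of original atoms. -/
def kOfM {α : Type} (M : Set (α ⊕ α)) : Set α := { a | Sum.inr a ∈ M }

/-- `k(W) = {ka ∈ K(P) : W ⊨ K a}`, read as a set of original atoms. -/
def kOfW {α : Type} (P : EProgram α) (W : Set (Set α)) : Set α :=
  { a | a ∈ KAtoms P ∧ ∀ I ∈ W, a ∈ I }

/-- Restriction of an interpretation to the original atoms `At(P)`. -/
def restr {α : Type} (M : Set (α ⊕ α)) : Set α := { a | Sum.inl a ∈ M }

/-- The positive part of the assumption determined by a set `S` of K-atoms: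
`ka` for each `ka ∈ K(P)` with `a ∈ S`. -/
def asmP {α : Type} (P : EProgram α) (S : Set α) : Set (α ⊕ α) := Sum.inr '' (S ∩ KAtoms P)

/-- The negative part of the assumption determined by a set `S` of K-atoms:
`¬ka` for each `ka ∈ K(P)` with `a ∉ S`. -/
def asmN {α : Type} (P : EProgram α) (S : Set α) : Set (α ⊕ α) := Sum.inr '' (KAtoms P \ S)

/-- A generator program for `P`. -/
def isGenerator {α : Type} (P : EProgram α) (G : Program (α ⊕ α)) : Prop :=
  (∀ W, isWorldview P W → ∃ M ∈ SM G, kOfM M = kOfW P W ∧ restr M ∈ W) ∧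
  (∀ M ∈ SM G, ∀ W : Set (Set α), kOfW P W = kOfM M → restr M ∈ SM (subjReduct P W))

/-- A tester program for `P`: a non-empty `W` is a worldview of `P` iff
`W` equals the restriction to `At(P)` of `SM(T; k(W))`. -/
def isTester {α : Type} (P : EProgram α) (T : Program (α ⊕ α)) : Prop :=
  ∀ W : Set (Set α), W.Nonempty →
    (isWorldview P W ↔ W = restr '' SMA T (asmP P (kOfW P W)) (asmN P (kOfW P W)))

/-- Atoms of the extended signature for the propagation program: original
atoms and `ka`-atoms (left) plus fresh atoms `kp_a`, `kn_a`, `kn_r` (right). -/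
abbrev PExt (α : Type) : Type := (α ⊕ α) ⊕ (α ⊕ (α ⊕ ERule α))

/-- An original atom `a` in the extended signature. -/
def aE {α : Type} (a : α) : PExt α := Sum.inl (Sum.inl a)

/-- The atom `ka` in the extended signature. -/
def kaE {α : Type} (a : α) : PExt α := Sum.inl (Sum.inr a)

/-- The fresh propagation atom `kp_a`. -/
def kpA {α : Type} (a : α) : PExt α := Sum.inr (Sum.inl a)

/-- The fresh propagation atom `kn_a`. -/
def knA {α : Type} (a : α) : PExt α := Sum.inr (Sum.inr (Sum.inl a))

/-- The fresh propagation atom `kn_r` for a rule `r`. -/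
def knR {α : Type} (r : ERule α) : PExt α := Sum.inr (Sum.inr (Sum.inr r))

/-- Translation of a body literal for the rules defining `kp_a`. -/
def SLit.kpBody {α : Type} : SLit α → Lit (PExt α)
  | .obj (.pos a) => .pos (kpA a)
  | .obj (.neg a) => .pos (knA a)
  | .k (.pos a) => .pos (kaE a)
  | .nk (.pos a) => .neg (kaE a)
  | .nnk (.pos a) => .nneg (kaE a)
  | _ => .bot

/-- Translation of a body literal for the rules defining `kn_r`
(the "complement" of the literal). -/
def SLit.knBody {α : Type} : SLit α → Lit (PExt α)
  | .obj (.pos a) => .pos (knA a)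
  | .obj (.neg a) => .pos (kpA a)
  | .k (.pos a) => .neg (kaE a)
  | .nk (.pos a) => .pos (kaE a)
  | .nnk (.pos a) => .neg (kaE a)
  | _ => .top

/-- The atoms occurring in a subjective literal. -/
def SLit.atoms {α : Type} : SLit α → Set α
  | .obj l => l.atoms
  | .k l => l.atoms
  | .nk l => l.atoms
  | .nnk l => l.atoms

/-- The atoms occurring in an epistemic program. -/
def AtE {α : Type} (P : EProgram α) : Set α :=
  { a | ∃ r ∈ P, a ∈ r.head ∨ ∃ L ∈ r.body, a ∈ L.atoms }

/-- The epistemic-propagation program `kp(P)`: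
rules `kp_{a} ← ...` for single-atom-head rules, rules `kn_r ← ...` for all
rules, and completion rules `kn_a ← kn_{r₁},...,kn_{rₖ}`. -/
def kpProg {α : Type} (P : EProgram α) : Program (PExt α) :=
  { r' | ∃ r ∈ P, ∃ a : α, r.head = {a} ∧ r' = ⟨{kpA a}, SLit.kpBody '' r.body⟩ }
  ∪ { r' | ∃ r ∈ P, ∃ L ∈ r.body, r' = ⟨{knR r}, {L.knBody}⟩ }
  ∪ { r' | ∃ a ∈ AtE P,
        r' = ⟨{knA a}, (fun r => Lit.pos (knR r)) '' { r ∈ P | a ∈ r.head }⟩ }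

/-- Rename the atoms of a rule. -/
def Rule.mapAtoms {α β : Type} (f : α → β) (r : Rule α) : Rule β :=
  ⟨f '' r.head, (Lit.map f) '' r.body⟩

/-- `G₀(P)` viewed over the extended signature. -/
def G0ext {α : Type} (P : EProgram α) : Program (PExt α) :=
  (Rule.mapAtoms Sum.inl) '' (G0 P)

/-- The generator program `G₁(P)`: `G₀(P)` together with the propagation
program `kp(P)` and consistency constraints `⊥ ← kp_a, ¬ka`. -/
def G1 {α : Type} (P : EProgram α) : Program (PExt α) :=
  G0ext P ∪ kpProg P
  ∪ { r' | ∃ a ∈ KAtoms P, r' = ⟨∅, {Lit.pos (kpA a), Lit.neg (kaE a)}⟩ }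

/-- Atoms `a₁,...,aₙ`, `n_a₁,...,n_aₙ`, `g`. -/
inductive At7 (n : ℕ) : Type
  | a (i : Fin n)
  | na (i : Fin n)
  | g

/-- The program `{aᵢ ← ¬K n_aᵢ; n_aᵢ ← ¬aᵢ; g ← aᵢ : 1 ≤ i ≤ n} ∪ {⊥ ← K g}`. -/
def Prog7 (n : ℕ) : EProgram (At7 n) :=
  { r | ∃ i : Fin n, r = ⟨{At7.a i}, {SLit.nk (Lit.pos (At7.na i))}⟩ }
  ∪ { r | ∃ i : Fin n, r = ⟨{At7.na i}, {SLit.obj (Lit.neg (At7.a i))}⟩ }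
  ∪ { r | ∃ i : Fin n, r = ⟨{At7.g}, {SLit.obj (Lit.pos (At7.a i))}⟩ }
  ∪ { (⟨∅, {SLit.k (Lit.pos At7.g)}⟩ : ERule (At7 n)) }

/-!
Write `K` for the set of indices `i` with `W ⊨ K n_aᵢ`. If `W ⊨ K g`, the constraint `⊥ ← K g`
leaves `(Π^W)^I` without models; otherwise `(Π^W)^I` has the least model
`{aᵢ : i ∉ K} ∪ {n_aᵢ : aᵢ ∉ I} ∪ {g : K ≠ univ}`. Stable models of `Π^W` are thus the fixpoints
of this operator, and the only one is the answer set with `aᵢ` true iff `i ∉ K` and `n_aᵢ` true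
iff `i ∈ K`. A worldview is therefore a singleton `{A}` with `g ∉ A`, which forces `K = univ`
and `A = {n_a₁, …, n_aₙ}`.
-/

section StableModels

variable {α : Type}

theorem isModel_reduct_iff {P : Program α} {I J : Set α} :
    isModel J (reduct P I) ↔ ∀ r ∈ P, (∀ L ∈ r.body, L.isNeg → L.sat I) →
      (∀ L ∈ r.body, ¬ L.isNeg → L.sat J) → ∃ a ∈ r.head, a ∈ J := by
  constructor
  · intro h r hr hneg hpos
    exact h ⟨r.head, {L | L ∈ r.body ∧ ¬ L.isNeg}⟩ ⟨r, hr, hneg, rfl⟩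
      fun L hL => hpos L hL.1 hL.2
  · rintro h _ ⟨r, hr, hneg, rfl⟩ hpos
    exact h r hr hneg fun L hL hL' => hpos L ⟨hL, hL'⟩

theorem isModel_reduct_subjReduct_iff {P : EProgram α} {W : Set (Set α)} {I J : Set α} :
    isModel J (reduct (subjReduct P W) I) ↔ ∀ r ∈ P,
      (∀ L ∈ r.body, (L.reduce W).isNeg → (L.reduce W).sat I) →
      (∀ L ∈ r.body, ¬ (L.reduce W).isNeg → (L.reduce W).sat J) → ∃ a ∈ r.head, a ∈ J := by
  simp only [isModel_reduct_iff, subjReduct, Set.forall_mem_image]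

theorem isStable_iff_eq_of_isLeast {P : Program α} {I L : Set α}
    (hL : IsLeast {J | isModel J (reduct P I)} L) : isStable P I ↔ I = L := by
  constructor
  · rintro ⟨hI, hmin⟩
    exact (hmin L (hL.2 hI) hL.1).symm
  · rintro rfl
    exact ⟨hL.1, fun J hJ hJmod => hJ.antisymm (hL.2 hJmod)⟩

@[simp]
theorem SLit.reduce_obj {W : Set (Set α)} {l : Lit α} : (SLit.obj l).reduce W = l := rfl

@[simp]
theorem SLit.isNeg_reduce_k {W : Set (Set α)} {l : Lit α} : ¬ ((SLit.k l).reduce W).isNeg := by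
  simp only [SLit.reduce]; split_ifs <;> exact id

@[simp]
theorem SLit.isNeg_reduce_nk {W : Set (Set α)} {l : Lit α} : ¬ ((SLit.nk l).reduce W).isNeg := by
  simp only [SLit.reduce]; split_ifs <;> exact id

@[simp]
theorem SLit.sat_reduce_k {W : Set (Set α)} {l : Lit α} {I : Set α} :
    ((SLit.k l).reduce W).sat I ↔ satK W l := by
  simp only [SLit.reduce]; split_ifs <;> simp_all [Lit.sat]

@[simp]
theorem SLit.sat_reduce_nk {W : Set (Set α)} {l : Lit α} {I : Set α} :
    ((SLit.nk l).reduce W).sat I ↔ ¬ satK W l := by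
  simp only [SLit.reduce]; split_ifs <;> simp_all [Lit.sat]

theorem satK_singleton {I : Set α} {l : Lit α} : satK {I} l ↔ l.sat I := by
  simp [satK]

end StableModels

namespace Prog7

variable {n : ℕ} (W : Set (Set (At7 n)))

def leastModel (I : Set (At7 n)) : Set (At7 n) := {x | match x with
  | .a i => ¬ satK W (.pos (.na i))
  | .na i => .a i ∉ I
  | .g => ∃ i, ¬ satK W (.pos (.na i))}

def answerSet : Set (At7 n) := {x | match x with
  | .a i => ¬ satK W (.pos (.na i))
  | .na i => satK W (.pos (.na i))
  | .g => ∃ i, ¬ satK W (.pos (.na i))}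

variable {W}

theorem isModel_reduct_iff {I J : Set (At7 n)} :
    isModel J (reduct (subjReduct (Prog7 n) W) I) ↔ ¬ satK W (.pos .g) ∧
      (∀ i, ¬ satK W (.pos (.na i)) → .a i ∈ J) ∧ (∀ i, .a i ∉ I → .na i ∈ J) ∧
      (∀ i, .a i ∈ J → .g ∈ J) := by
  rw [isModel_reduct_subjReduct_iff]
  simp [Prog7, or_imp, forall_and, Lit.isNeg.eq_1, Lit.isNeg.eq_3, Lit.sat.eq_1, Lit.sat.eq_2, and_assoc]

theorem isLeast_leastModel (hg : ¬ satK W (.pos .g)) (I : Set (At7 n)) :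
    IsLeast {J | isModel J (reduct (subjReduct (Prog7 n) W) I)} (leastModel W I) := by
  refine ⟨isModel_reduct_iff.2 ⟨hg, fun i hi => hi, fun i hi => hi, fun i hi => ⟨i, hi⟩⟩, ?_⟩
  intro J hJ
  obtain ⟨-, ha, hna, hg⟩ := isModel_reduct_iff.1 hJ
  rintro (i | i | -)
  · exact ha i
  · exact hna i
  · rintro ⟨i, hi⟩
    exact hg i (ha i hi)

theorem mem_SM_iff {I : Set (At7 n)} :
    I ∈ SM (subjReduct (Prog7 n) W) ↔ ¬ satK W (.pos .g) ∧ I = leastModel W I := by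
  by_cases hg : satK W (.pos .g)
  · simp only [hg, not_true_eq_false, false_and, iff_false]
    exact fun hI => (isModel_reduct_iff.1 hI.1).1 hg
  · simp only [hg, not_false_eq_true, true_and]
    exact isStable_iff_eq_of_isLeast (isLeast_leastModel hg I)

theorem eq_leastModel_iff {I : Set (At7 n)} : I = leastModel W I ↔ I = answerSet W := by
  constructor
  · intro h
    ext (i | i | -)
    · rw [h]; rfl
    · rw [h]
      show .a i ∉ I ↔ _
      rw [h]
      exact not_not
    · rw [h]; rfl
  · rintro rfl
    ext (i | i | -)
    · rfl
    · exact not_not.symm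
    · rfl

theorem answerSet_eq_of_forall_satK (h : ∀ i, satK W (.pos (.na i))) :
    answerSet W = {x | ∃ i, x = .na i} := by
  ext (i | i | -) <;> simp [answerSet, h]

end Prog7

/-- the unique worldview of `Prog7 n` is the singleton containing
the interpretation making all `n_aᵢ` true and all `aᵢ` and `g` false. -/
theorem unique_worldview_prog7 (n : ℕ) (W : Set (Set (At7 n))) :
    isWorldview (Prog7 n) W ↔
      W = {{ x : At7 n | ∃ i : Fin n, x = At7.na i }} := by
  constructor
  · rintro ⟨⟨I, hI⟩, hW⟩
    rw [hW, Prog7.mem_SM_iff] at hI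
    have hW' : W = {Prog7.answerSet W} := by
      conv_lhs => rw [hW]
      ext J
      simp only [Prog7.mem_SM_iff, Prog7.eq_leastModel_iff, hI.1, not_false_eq_true, true_and,
        Set.mem_singleton_iff]
    have hknown : ∀ i, satK W (.pos (.na i)) := by
      have hg := hI.1
      rw [hW', satK_singleton] at hg
      simpa [Prog7.answerSet, Lit.sat] using hg
    rw [hW', Prog7.answerSet_eq_of_forall_satK hknown]
  · rintro rfl
    have hknown (i : Fin n) : satK {{ x : At7 n | ∃ i : Fin n, x = At7.na i }} (.pos (.na i)) :=
      satK_singleton.2 ⟨i, rfl⟩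
    refine ⟨Set.singleton_nonempty _, ?_⟩
    ext I
    rw [Prog7.mem_SM_iff, Prog7.eq_leastModel_iff, Prog7.answerSet_eq_of_forall_satK hknown,
      satK_singleton]
    simp [Lit.sat]
end

section
/- Let G(Π) be a generator program and T(Π) a tester program for Π. If W is a worldview of Π, then there exists a stable model M of G(Π) with k(W) = k(M) such that k(M) = {ka ∈ K(Π) : a belongs to every stable model of T(Π) under assumption k(M)}. -/
theorem kOfW_image_restr {α : Type} (P : EProgram α) (S : Set (Set (α ⊕ α))) :
    kOfW P (restr '' S) = { a | a ∈ KAtoms P ∧ ∀ N ∈ S, Sum.inl a ∈ N } := by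
  simp only [kOfW, Set.forall_mem_image, restr, Set.mem_ofPred_eq]

theorem generator_tester_completeness_general {α : Type} (P : EProgram α)
    (G T : Program (α ⊕ α)) (hG : isGenerator P G) (hT : isTester P T)
    (W : Set (Set α)) (hW : isWorldview P W) :
    ∃ M ∈ SM G, kOfM M = kOfW P W ∧
      kOfM M = { a | a ∈ KAtoms P ∧
        ∀ N ∈ SMA T (asmP P (kOfM M)) (asmN P (kOfM M)), Sum.inl a ∈ N } := by
  obtain ⟨M, hM, hk, -⟩ := hG.1 W hW
  refine ⟨M, hM, hk, ?_⟩
  have hW_eq := (hT W hW.1).mp hW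
  rw [hk, ← kOfW_image_restr, ← hW_eq]

/-- if `W` is a worldview of `Π`, then some stable model `M` of
the generator program `G(Π)` with `k(W) = k(M)` satisfies
`k(M) = {ka ∈ K(Π) : a ∈ SMC(T(Π); k(M))}`. -/
theorem generator_tester_completeness {α : Type} (P : EProgram α) (hfin : P.Finite)
    (G T : Program (α ⊕ α)) (hG : isGenerator P G) (hT : isTester P T)
    (W : Set (Set α)) (hW : isWorldview P W) :
    ∃ M ∈ SM G, kOfM M = kOfW P W ∧
      kOfM M = { a | a ∈ KAtoms P ∧
        ∀ N ∈ SMA T (asmP P (kOfM M)) (asmN P (kOfM M)), Sum.inl a ∈ N } :=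
  generator_tester_completeness_general P G T hG hT W hW
end

section
/- Every stable model of G₁(Π), restricted to the atoms of G₀(Π), is a stable model of G₀(Π); consequently the number of stable models of G₁(Π) is at most the number of stable models of G₀(Π). -/
/-!
A splitting-set argument. Every rule of `kp(P)` and every new constraint of `G₁(P)` has at most
one head atom, and that atom is fresh. So if `J` is a model of the reduct of `G₀(P)` below the
restriction of a stable model `M'` of `G₁(P)`, then `J` together with the fresh atoms of `M'` is
a model of the reduct of `G₁(P)`, and minimality of `M'` gives minimality of its restriction.
Negation in `G₁(P)` applies to atoms of `G₀(P)` only, so two stable models with the same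
restriction have the same reduct; since every head is a single atom or consists of atoms of
`G₀(P)`, the intersection of the two models is again a model of that reduct, and minimality makes
them equal. Restriction is thus injective into `SM(G₀(P))`, which is finite because a stable model
consists of head atoms.
-/

section Splitting

variable {β γ : Type}

namespace Lit

theorem sat_congr {L : Lit β} {I J : Set β} (h : ∀ a ∈ L.atoms, a ∈ I ↔ a ∈ J) :
    L.sat I ↔ L.sat J := by
  cases L <;> simp_all [sat, atoms]

theorem sat_of_subset {L : Lit β} (hL : ¬L.isNeg) {I J : Set β} (hIJ : I ⊆ J) (h : L.sat I) :
    L.sat J := by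
  cases L with
  | pos a => exact hIJ h
  | _ => simp_all [sat, isNeg]

@[simp]
theorem isNeg_map (f : β → γ) (L : Lit β) : (L.map f).isNeg ↔ L.isNeg := by
  cases L <;> simp [map, isNeg]

@[simp]
theorem sat_map (f : β → γ) (L : Lit β) (I : Set γ) : (L.map f).sat I ↔ L.sat (f ⁻¹' I) := by
  cases L <;> simp [map, sat]

theorem atoms_map (f : β → γ) (L : Lit β) : (L.map f).atoms = f '' L.atoms := by
  cases L <;> simp [map, atoms]

end Lit

/-- The rule that survives in a reduct. -/
def Rule.positivePart (r : Rule β) : Rule β := ⟨r.head, {L | L ∈ r.body ∧ ¬L.isNeg}⟩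

theorem Rule.sat_mapAtoms (f : β → γ) (r : Rule β) (I : Set γ) :
    (r.mapAtoms f).sat I ↔ r.sat (f ⁻¹' I) := by
  simp [Rule.sat, Rule.mapAtoms]

theorem Rule.positivePart_mapAtoms (f : β → γ) (r : Rule β) :
    (r.mapAtoms f).positivePart = r.positivePart.mapAtoms f := by
  simp only [positivePart, mapAtoms, Rule.mk.injEq, true_and]
  ext L
  simp only [Set.mem_ofPred_eq, Set.mem_image]
  aesop

theorem reduct_image_mapAtoms (f : β → γ) (Q : Program β) (I : Set γ) :
    reduct (Rule.mapAtoms f '' Q) I = Rule.mapAtoms f '' reduct Q (f ⁻¹' I) := by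
  ext r'
  simp only [reduct, Set.mem_image, Set.mem_ofPred_eq]
  constructor
  · rintro ⟨_, ⟨r, hr, rfl⟩, hneg, rfl⟩
    refine ⟨r.positivePart, ⟨r, hr, ?_, rfl⟩, (r.positivePart_mapAtoms f).symm⟩
    intro L hL hL'
    simpa using hneg (L.map f) ⟨L, hL, rfl⟩ (by simpa using hL')
  · rintro ⟨_, ⟨r, hr, hneg, rfl⟩, rfl⟩
    refine ⟨r.mapAtoms f, ⟨r, hr, rfl⟩, ?_, (r.positivePart_mapAtoms f).symm⟩
    rintro _ ⟨L, hL, rfl⟩ hL'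
    simpa using hneg L hL (by simpa using hL')

theorem isModel_image_mapAtoms (f : β → γ) (Q : Program β) (I : Set γ) :
    isModel I (Rule.mapAtoms f '' Q) ↔ isModel (f ⁻¹' I) Q := by
  simp [isModel, Rule.sat_mapAtoms]

theorem reduct_union (Q₁ Q₂ : Program β) (I : Set β) :
    reduct (Q₁ ∪ Q₂) I = reduct Q₁ I ∪ reduct Q₂ I := by
  ext r'
  simp only [reduct, Set.mem_union, Set.mem_ofPred_eq]
  aesop

theorem isModel_union {I : Set β} {Q₁ Q₂ : Program β} :
    isModel I (Q₁ ∪ Q₂) ↔ isModel I Q₁ ∧ isModel I Q₂ := by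
  simp only [isModel, Set.mem_union, or_imp, forall_and]

theorem reduct_congr {Q : Program β} {I J : Set β}
    (h : ∀ r ∈ Q, ∀ L ∈ r.body, L.isNeg → ∀ a ∈ L.atoms, a ∈ I ↔ a ∈ J) :
    reduct Q I = reduct Q J := by
  ext r'
  constructor <;> rintro ⟨r, hr, hneg, rfl⟩ <;> refine ⟨r, hr, fun L hL hL' => ?_, rfl⟩
  · exact (Lit.sat_congr (h r hr L hL hL')).mp (hneg L hL hL')
  · exact (Lit.sat_congr (h r hr L hL hL')).mpr (hneg L hL hL')

theorem isModel_reduct_of_subset {Q : Program β} {I J M : Set β} (hJM : J ⊆ M)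
    (hM : isModel M (reduct Q I)) (hhead : ∀ r ∈ Q, ∀ a ∈ r.head, a ∈ M → a ∈ J) :
    isModel J (reduct Q I) := by
  rintro _ ⟨r, hr, hneg, rfl⟩ hbody
  obtain ⟨a, ha, haM⟩ := hM _ ⟨r, hr, hneg, rfl⟩
    fun L hL => Lit.sat_of_subset hL.2 hJM (hbody L hL)
  exact ⟨a, ha, hhead r hr a ha haM⟩

theorem isStable.eq_of_reduct_eq {Q : Program β} {M₁ M₂ : Set β} (h₁ : isStable Q M₁)
    (h₂ : isStable Q M₂) (hred : reduct Q M₁ = reduct Q M₂)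
    (hhead : ∀ r ∈ Q, r.head.Subsingleton ∨ ∀ a ∈ r.head, a ∈ M₁ → a ∈ M₂) : M₁ = M₂ := by
  have hmodel : isModel (M₁ ∩ M₂) (reduct Q M₁) := by
    rintro _ ⟨r, hr, hneg, rfl⟩ hbody
    have hr₁ : r.positivePart ∈ reduct Q M₁ := ⟨r, hr, hneg, rfl⟩
    have hr₂ : r.positivePart ∈ reduct Q M₂ := hred ▸ hr₁
    obtain ⟨a, ha, haM₁⟩ := h₁.1 _ hr₁
      fun L hL => Lit.sat_of_subset hL.2 Set.inter_subset_left (hbody L hL)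
    rcases hhead r hr with hsub | hmem
    · obtain ⟨b, hb, hbM₂⟩ := h₂.1 _ hr₂
        fun L hL => Lit.sat_of_subset hL.2 Set.inter_subset_right (hbody L hL)
      exact ⟨a, ha, haM₁, hsub hb ha ▸ hbM₂⟩
    · exact ⟨a, ha, haM₁, hmem a ha haM₁⟩
  have hM₁ := h₁.2 _ Set.inter_subset_left hmodel
  have hM₂ := h₂.2 _ Set.inter_subset_right (hred ▸ hmodel)
  rw [← hM₁, hM₂]

theorem isStable.subset_heads {Q : Program β} {I : Set β} (h : isStable Q I) :
    I ⊆ {a | ∃ r ∈ Q, a ∈ r.head} := by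
  have hmodel : isModel (I ∩ {a | ∃ r ∈ Q, a ∈ r.head}) (reduct Q I) :=
    isModel_reduct_of_subset Set.inter_subset_left h.1 fun r hr a ha haI => ⟨haI, r, hr, ha⟩
  rw [← h.2 _ Set.inter_subset_left hmodel]
  exact Set.inter_subset_right

theorem SM_finite_of_heads_finite {Q : Program β} (h : {a | ∃ r ∈ Q, a ∈ r.head}.Finite) :
    (SM Q).Finite :=
  h.finite_subsets.subset fun _ hI => isStable.subset_heads hI

theorem isStable_preimage_inl {B : Program β} {T : Program (β ⊕ γ)}
    (hT : ∀ r ∈ T, r.head ⊆ Set.range Sum.inr) {M : Set (β ⊕ γ)}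
    (hM : isStable (Rule.mapAtoms Sum.inl '' B ∪ T) M) : isStable B (Sum.inl ⁻¹' M) := by
  obtain ⟨hmodel, hmin⟩ := hM
  rw [reduct_union, isModel_union, reduct_image_mapAtoms, isModel_image_mapAtoms] at hmodel
  refine ⟨hmodel.1, fun J hJ hJmodel => ?_⟩
  set J' : Set (β ⊕ γ) := Sum.inl '' J ∪ (M ∩ Set.range Sum.inr)
  have hJ' : Sum.inl ⁻¹' J' = J := by ext; simp [J']
  have hJ'M : J' ⊆ M := Set.union_subset (Set.image_subset_iff.mpr hJ) Set.inter_subset_left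
  have hJ'model : isModel J' (reduct (Rule.mapAtoms Sum.inl '' B ∪ T) M) := by
    rw [reduct_union, isModel_union, reduct_image_mapAtoms, isModel_image_mapAtoms, hJ']
    exact ⟨hJmodel, isModel_reduct_of_subset hJ'M hmodel.2
      fun r hr a ha haM => Or.inr ⟨haM, hT r hr ha⟩⟩
  rw [← hJ', hmin J' hJ'M hJ'model]

theorem injOn_preimage_inl_SM {B : Program β} {T : Program (β ⊕ γ)}
    (hhead : ∀ r ∈ T, r.head.Subsingleton)
    (hneg : ∀ r ∈ T, ∀ L ∈ r.body, L.isNeg → L.atoms ⊆ Set.range Sum.inl) :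
    Set.InjOn (Sum.inl ⁻¹' ·) (SM (Rule.mapAtoms Sum.inl '' B ∪ T)) := by
  intro M₁ h₁ M₂ h₂ h
  have hagree : ∀ a ∈ Set.range (Sum.inl : β → β ⊕ γ), a ∈ M₁ ↔ a ∈ M₂ := by
    rintro _ ⟨x, rfl⟩
    exact Set.ext_iff.mp h x
  refine h₁.eq_of_reduct_eq h₂ (reduct_congr ?_) ?_
  · rintro r (⟨r₀, -, rfl⟩ | hr) L hL hL' a ha
    · obtain ⟨L₀, -, rfl⟩ := hL
      rw [Lit.atoms_map] at ha
      exact hagree a (Set.image_subset_range _ _ ha)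
    · exact hagree a (hneg r hr L hL hL' ha)
  · rintro r (⟨r₀, -, rfl⟩ | hr)
    · exact Or.inr fun a ha haM₁ => (hagree a (Set.image_subset_range _ _ ha)).mp haM₁
    · exact Or.inl (hhead r hr)

end Splitting

section Finiteness

variable {β : Type}

theorem Lit.atoms_finite (L : Lit β) : L.atoms.Finite := by
  cases L <;> simp [Lit.atoms]

theorem SLit.atoms_finite (L : SLit β) : L.atoms.Finite := by
  cases L <;> exact Lit.atoms_finite _

theorem AtE_finite {P : EProgram β} (hfin : P.Finite)
    (hr : ∀ r ∈ P, r.head.Finite ∧ r.body.Finite) : (AtE P).Finite := by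
  refine (hfin.biUnion fun r hrP =>
    (hr r hrP).1.union ((hr r hrP).2.biUnion fun L _ => L.atoms_finite)).subset ?_
  rintro a ⟨r, hrP, ha⟩
  simp only [Set.mem_iUnion, Set.mem_union, exists_prop]
  exact ⟨r, hrP, ha⟩

theorem KAtoms_subset_AtE (P : EProgram β) : KAtoms P ⊆ AtE P := by
  rintro a ⟨r, hrP, hk | hk | hk⟩ <;> exact ⟨r, hrP, Or.inr ⟨_, hk, rfl⟩⟩

theorem G0_heads_subset (P : EProgram β) :
    {a | ∃ r ∈ G0 P, a ∈ r.head} ⊆ Sum.inl '' AtE P ∪ Sum.inr '' AtE P := by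
  rintro _ ⟨_, ((⟨r, hrP, rfl⟩ | ⟨a, ha, rfl⟩) | ⟨a, -, rfl⟩), hx⟩
  · obtain ⟨b, hb, rfl⟩ := hx
    exact Or.inl ⟨b, ⟨r, hrP, Or.inl hb⟩, rfl⟩
  · exact Or.inr ⟨a, KAtoms_subset_AtE P ha, hx.symm⟩
  · exact hx.elim

theorem SM_G0_finite {P : EProgram β} (hfin : P.Finite)
    (hr : ∀ r ∈ P, r.head.Finite ∧ r.body.Finite) : (SM (G0 P)).Finite :=
  SM_finite_of_heads_finite <| ((AtE_finite hfin hr).image _ |>.union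
    ((AtE_finite hfin hr).image _)).subset (G0_heads_subset P)

end Finiteness

section Propagation

variable {α : Type}

def kpConstraints (P : EProgram α) : Program (PExt α) :=
  { r' | ∃ a ∈ KAtoms P, r' = ⟨∅, {Lit.pos (kpA a), Lit.neg (kaE a)}⟩ }

theorem G1_eq_union (P : EProgram α) :
    G1 P = Rule.mapAtoms Sum.inl '' G0 P ∪ (kpProg P ∪ kpConstraints P) :=
  Set.union_assoc _ _ _

theorem head_subsingleton_and_subset_range_inr_of_mem_kpProg_union {P : EProgram α}
    {r : Rule (PExt α)} (hr : r ∈ kpProg P ∪ kpConstraints P) :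
    r.head.Subsingleton ∧ r.head ⊆ Set.range Sum.inr := by
  rcases hr with ((⟨r₀, -, a, -, rfl⟩ | ⟨r₀, -, L₀, -, rfl⟩) | ⟨a, -, rfl⟩) | ⟨a, -, rfl⟩
  any_goals exact ⟨Set.subsingleton_singleton, Set.singleton_subset_iff.mpr ⟨_, rfl⟩⟩
  exact ⟨Set.subsingleton_empty, Set.empty_subset _⟩

theorem SLit.atoms_kpBody_subset_range_inl {L : SLit α} (h : L.kpBody.isNeg) :
    L.kpBody.atoms ⊆ Set.range Sum.inl := by
  rcases L with l | l | l | l <;> cases l <;> simp_all [SLit.kpBody, Lit.isNeg, Lit.atoms, kaE]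

theorem SLit.atoms_knBody_subset_range_inl {L : SLit α} (h : L.knBody.isNeg) :
    L.knBody.atoms ⊆ Set.range Sum.inl := by
  rcases L with l | l | l | l <;> cases l <;> simp_all [SLit.knBody, Lit.isNeg, Lit.atoms, kaE]

theorem atoms_subset_range_inl_of_mem_kpProg_union {P : EProgram α} {r : Rule (PExt α)}
    (hr : r ∈ kpProg P ∪ kpConstraints P) {L : Lit (PExt α)} (hL : L ∈ r.body) (hneg : L.isNeg) :
    L.atoms ⊆ Set.range Sum.inl := by
  rcases hr with ((⟨r₀, -, a, -, rfl⟩ | ⟨r₀, -, L₀, -, rfl⟩) | ⟨a, -, rfl⟩) | ⟨a, -, rfl⟩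
  · obtain ⟨L₀, -, rfl⟩ := hL
    exact SLit.atoms_kpBody_subset_range_inl hneg
  · rw [Set.mem_singleton_iff.mp hL] at hneg ⊢
    exact SLit.atoms_knBody_subset_range_inl hneg
  · obtain ⟨r₀, -, rfl⟩ := hL
    exact hneg.elim
  · rcases hL with rfl | rfl
    · exact hneg.elim
    · simp [Lit.atoms, kaE]

end Propagation

theorem G1_at_most_G0_general {α : Type} (P : EProgram α) (hfin : P.Finite)
    (hr : ∀ r ∈ P, r.head.Finite ∧ r.body.Finite) :
    (∀ M' ∈ SM (G1 P), { x : α ⊕ α | Sum.inl x ∈ M' } ∈ SM (G0 P))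
    ∧ (SM (G1 P)).ncard ≤ (SM (G0 P)).ncard := by
  have hhead : ∀ r ∈ kpProg P ∪ kpConstraints P,
      r.head.Subsingleton ∧ r.head ⊆ Set.range Sum.inr :=
    fun _ => head_subsingleton_and_subset_range_inr_of_mem_kpProg_union
  have hrestrict : ∀ M' ∈ SM (G1 P), { x : α ⊕ α | Sum.inl x ∈ M' } ∈ SM (G0 P) :=
    fun M' hM' => isStable_preimage_inl (fun r hr => (hhead r hr).2) (G1_eq_union P ▸ hM')
  have hinj : Set.InjOn (Sum.inl ⁻¹' ·) (SM (G1 P)) := G1_eq_union P ▸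
    injOn_preimage_inl_SM (fun r hr => (hhead r hr).1)
      fun _ hr _ => atoms_subset_range_inl_of_mem_kpProg_union hr
  exact ⟨hrestrict, Set.ncard_le_ncard_of_injOn _ hrestrict hinj (SM_G0_finite hfin hr)⟩

/-- every stable model of `G₁(Π)`, restricted to the atoms of
`G₀(Π)`, is a stable model of `G₀(Π)`; consequently `G₁(Π)` has at most as
many stable models as `G₀(Π)`. -/
theorem G1_at_most_G0 {α : Type} (P : EProgram α) (hfin : P.Finite)
    (hr : ∀ r ∈ P, r.head.Finite ∧ r.body.Finite) (hnf : isNormalForm P) :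
    (∀ M' ∈ SM (G1 P), { x : α ⊕ α | Sum.inl x ∈ M' } ∈ SM (G0 P))
    ∧ (SM (G1 P)).ncard ≤ (SM (G0 P)).ncard :=
  G1_at_most_G0_general P hfin hr
end
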